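/- Every deterministic Büchi automaton that accepts an ω-language belonging to F_σ ∩ G_δ (in the prefix-distance topology on Σ^ω) is inherently weak: no reachable strongly connected component of its transition graph contains both an accepting and a non-accepting cycle. -/

import Mathlib

/-- A deterministic Büchi automaton on infinite words. -/
structure DBA (A Q : Type*) where
  delta : Q → A → Q
  init : Q
  acc : Set Q

/-- The unique run of a deterministic automaton on an infinite word. -/
def DBA.run {A Q : Type*} (M : DBA A Q) (w : ℕ → A) : ℕ → Q
  | 0 => M.init
  | n + 1 => M.delta (M.run w n) (w n)

/-- The ω-language accepted by the deterministic Büchi automaton. -/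
def DBA.Lang {A Q : Type*} (M : DBA A Q) : Set (ℕ → A) :=
  {w | {n | M.run w n ∈ M.acc}.Infinite}

/-- The state reached from `q` after reading the finite word `u`. -/
def DBA.steps {A Q : Type*} (M : DBA A Q) (q : Q) (u : List A) : Q :=
  u.foldl M.delta q

/-- An accepting cycle at `q`: a nonempty cycle from `q` back to `q` one of
whose states belongs to the accepting set. -/
def DBA.AccCycle {A Q : Type*} (M : DBA A Q) (q : Q) : Prop :=
  ∃ u : List A, u ≠ [] ∧ M.steps q u = q ∧
    ∃ i, i < u.length ∧ M.steps q (u.take i) ∈ M.acc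

/-- A non-accepting cycle at `q`: a nonempty cycle from `q` back to `q` none
of whose states belongs to the accepting set. -/
def DBA.RejCycle {A Q : Type*} (M : DBA A Q) (q : Q) : Prop :=
  ∃ u : List A, u ≠ [] ∧ M.steps q u = q ∧
    ∀ i, i < u.length → M.steps q (u.take i) ∉ M.acc

/-- The automaton is inherently weak: no reachable strongly connected
component of its transition graph contains both an accepting and a
non-accepting cycle. -/
def DBA.InherentlyWeak {A Q : Type*} (M : DBA A Q) : Prop :=
  ¬ ∃ q₁ q₂ : Q,
      (∃ u, M.steps M.init u = q₁) ∧
      (∃ v, M.steps q₁ v = q₂) ∧ (∃ v, M.steps q₂ v = q₁) ∧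
      M.AccCycle q₁ ∧ M.RejCycle q₂

/-- Length of the longest common prefix of two distinct infinite words. -/
noncomputable def commonLen {A : Type*} (w w' : ℕ → A) : ℕ :=
  sInf {n | w n ≠ w' n}

/-- The prefix distance on infinite words. -/
noncomputable def wdist {A : Type*} (w w' : ℕ → A) : ℝ :=
  letI := Classical.propDecidable (w = w')
  if w = w' then 0 else 1 / (commonLen w w' + 1)

/-- Openness in the prefix-distance topology on `Σ^ω`. -/
def IsOpenW {A : Type*} (U : Set (ℕ → A)) : Prop :=
  ∀ w ∈ U, ∃ ε : ℝ, 0 < ε ∧ ∀ w', wdist w w' < ε → w' ∈ U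

/-- `F_σ` in the prefix-distance topology: countable union of closed sets. -/
def IsFsigmaW {A : Type*} (L : Set (ℕ → A)) : Prop :=
  ∃ C : ℕ → Set (ℕ → A), (∀ i, IsOpenW (C i)ᶜ) ∧ L = ⋃ i, C i

/-- `G_δ` in the prefix-distance topology: countable intersection of opens. -/
def IsGdeltaW {A : Type*} (L : Set (ℕ → A)) : Prop :=
  ∃ U : ℕ → Set (ℕ → A), (∀ i, IsOpenW (U i)) ∧ L = ⋂ i, U i

open Filter Topology Set

/-!
If `q₁` carries an accepting cycle and `q₂` a non-accepting one in the same reachable strongly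
connected component, read a word leading to `q₂` and then, for each bit of `b : ℕ → Bool`,
either the non-accepting cycle at `q₂` or a detour through the accepting cycle at `q₁`. The
`n`-th letter depends only on the first `n + 1` bits, so this map from the Cantor space is
continuous, and it pulls the language back to the set of bit sequences with infinitely many
`true`s. That set and its complement are both dense, so by the Baire category theorem they
cannot both be `G_δ`; they would be if the language were both `G_δ` and `F_σ`.
-/

lemma wdist_le_of_forall_lt_eq {A : Type*} {w w' : ℕ → A} {N : ℕ}
    (h : ∀ n < N, w n = w' n) : wdist w w' ≤ 1 / (N + 1) := by
  by_cases hw : w = w'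
  · simp only [wdist, hw, if_true]
    positivity
  have hN : N ≤ commonLen w w' :=
    le_csInf (Function.ne_iff.1 hw) fun n hn => not_lt.1 fun hlt => hn (h n hlt)
  rw [wdist, if_neg hw]
  gcongr

lemma IsOpenW.exists_forall_lt_eq_mem {A : Type*} {U : Set (ℕ → A)} (hU : IsOpenW U)
    {w : ℕ → A} (hw : w ∈ U) : ∃ N : ℕ, ∀ w', (∀ n < N, w n = w' n) → w' ∈ U := by
  obtain ⟨ε, hε, hball⟩ := hU w hw
  obtain ⟨N, hN⟩ := exists_nat_one_div_lt hε
  exact ⟨N, fun w' h => hball w' ((wdist_le_of_forall_lt_eq h).trans_lt hN)⟩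

section Causal

variable {X A : Type*} [TopologicalSpace X] [DiscreteTopology X] {f : (ℕ → X) → ℕ → A}

lemma isOpen_preimage_of_isOpenW (hf : ∀ n b b', (∀ i ≤ n, b i = b' i) → f b n = f b' n)
    {U : Set (ℕ → A)} (hU : IsOpenW U) : IsOpen (f ⁻¹' U) := by
  refine isOpen_iff_mem_nhds.2 fun b hb => ?_
  obtain ⟨N, hN⟩ := hU.exists_forall_lt_eq_mem hb
  have hcyl : (Iio N).pi (fun i => {b i}) ∈ 𝓝 b :=
    (isOpen_set_pi (finite_Iio N) fun _ _ => isOpen_discrete _).mem_nhds (by simp)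
  refine mem_of_superset hcyl fun b' hb' => hN _ fun n hn => hf n b b' fun i hi => ?_
  exact (hb' i (lt_of_le_of_lt hi hn)).symm

lemma IsGdeltaW.isGδ_preimage (hf : ∀ n b b', (∀ i ≤ n, b i = b' i) → f b n = f b' n)
    {L : Set (ℕ → A)} (hL : IsGdeltaW L) : IsGδ (f ⁻¹' L) := by
  obtain ⟨U, hU, rfl⟩ := hL
  rw [preimage_iInter]
  exact .iInter_of_isOpen fun i => isOpen_preimage_of_isOpenW hf (hU i)

lemma IsFsigmaW.isGδ_preimage_compl (hf : ∀ n b b', (∀ i ≤ n, b i = b' i) → f b n = f b' n)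
    {L : Set (ℕ → A)} (hL : IsFsigmaW L) : IsGδ (f ⁻¹' L)ᶜ := by
  obtain ⟨C, hC, rfl⟩ := hL
  simp_rw [preimage_iUnion, compl_iUnion, ← preimage_compl]
  exact .iInter_of_isOpen fun i => isOpen_preimage_of_isOpenW hf (hC i)

end Causal

lemma tendsto_ite_lt_atTop_nhds {X : Type*} [TopologicalSpace X] (b c : ℕ → X) :
    Tendsto (fun N n => if n < N then b n else c n) atTop (𝓝 b) :=
  tendsto_pi_nhds.2 fun n => tendsto_const_nhds.congr' <|
    (eventually_gt_atTop n).mono fun _ hN => (if_pos hN).symm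

lemma dense_setOf_infinite_true : Dense {b : ℕ → Bool | {k | b k}.Infinite} := fun b =>
  mem_closure_of_tendsto (tendsto_ite_lt_atTop_nhds b fun _ => true) <| .of_forall fun N =>
    (Ici_infinite N).mono fun k hk => by simp [show N ≤ k from hk]

lemma dense_compl_setOf_infinite_true : Dense {b : ℕ → Bool | {k | b k}.Infinite}ᶜ := fun b =>
  mem_closure_of_tendsto (tendsto_ite_lt_atTop_nhds b fun _ => false) <| .of_forall fun N =>
    not_not.2 <| (finite_Iio N).subset fun k hk => by
      by_contra hkN
      simp [mem_Iio.not.1 hkN] at hk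

theorem not_isGδ_setOf_infinite_true_and_compl :
    ¬ (IsGδ {b : ℕ → Bool | {k | b k}.Infinite} ∧
      IsGδ {b : ℕ → Bool | {k | b k}.Infinite}ᶜ) := by
  rintro ⟨h, hc⟩
  obtain ⟨b, hb, hbc⟩ :=
    (Dense.inter_of_Gδ h hc dense_setOf_infinite_true dense_compl_setOf_infinite_true).nonempty
  exact hbc hb

section Blocks

variable {ι A : Type*} (p : List A) (B : ι → List A)

def blockPrefix (b : ℕ → ι) : ℕ → List A
  | 0 => p
  | k + 1 => blockPrefix b k ++ B (b k)

-- The default letter `d` is never read when all blocks are nonempty.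
def blockWord (d : A) (b : ℕ → ι) (n : ℕ) : A :=
  (blockPrefix p B b (n + 1)).getD n d

variable {p B}

lemma blockPrefix_isPrefix_of_le (b : ℕ → ι) {k j : ℕ} (h : k ≤ j) :
    blockPrefix p B b k <+: blockPrefix p B b j := by
  induction j, h using Nat.le_induction with
  | base => exact List.prefix_refl _
  | succ j _ ih => exact ih.trans (List.prefix_append _ _)

lemma length_blockPrefix_succ (b : ℕ → ι) (k : ℕ) :
    (blockPrefix p B b (k + 1)).length = (blockPrefix p B b k).length + (B (b k)).length :=
  List.length_append

lemma blockPrefix_congr {b b' : ℕ → ι} {k : ℕ} (h : ∀ i < k, b i = b' i) :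
    blockPrefix p B b k = blockPrefix p B b' k := by
  induction k with
  | zero => rfl
  | succ k ih => rw [blockPrefix, blockPrefix, ih fun i hi => h i (by omega), h k k.lt_succ_self]

lemma blockWord_congr (d : A) (n : ℕ) (b b' : ℕ → ι) (h : ∀ i ≤ n, b i = b' i) :
    blockWord p B d b n = blockWord p B d b' n := by
  rw [blockWord, blockWord, blockPrefix_congr fun i hi => h i (Nat.le_of_lt_succ hi)]

lemma strictMono_length_blockPrefix (hne : ∀ i, B i ≠ []) (b : ℕ → ι) :
    StrictMono fun k => (blockPrefix p B b k).length :=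
  strictMono_nat_of_lt_succ fun k => by
    rw [length_blockPrefix_succ]
    exact Nat.lt_add_of_pos_right (List.length_pos_iff.2 (hne _))

lemma le_length_blockPrefix (hne : ∀ i, B i ≠ []) (b : ℕ → ι) (k : ℕ) :
    k ≤ (blockPrefix p B b k).length :=
  (strictMono_length_blockPrefix hne b).le_apply

lemma map_range_blockWord (hne : ∀ i, B i ≠ []) (d : A) (b : ℕ → ι) (k : ℕ) :
    (List.range (blockPrefix p B b k).length).map (blockWord p B d b) = blockPrefix p B b k := by
  refine List.ext_getElem (by simp) fun n hn hn' => ?_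
  have hn₁ : n < (blockPrefix p B b (n + 1)).length := le_length_blockPrefix hne b (n + 1)
  rw [List.getElem_map, List.getElem_range, blockWord, List.getD_eq_getElem _ _ hn₁]
  rcases le_total k (n + 1) with h | h
  · exact ((blockPrefix_isPrefix_of_le b h).getElem hn').symm
  · exact (blockPrefix_isPrefix_of_le b h).getElem hn₁

end Blocks

namespace DBA

variable {A Q ι : Type*} {M : DBA A Q}

lemma steps_append (q : Q) (u v : List A) : M.steps q (u ++ v) = M.steps (M.steps q u) v :=
  List.foldl_append

lemma run_eq_steps_map_range (w : ℕ → A) (n : ℕ) :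
    M.run w n = M.steps M.init ((List.range n).map w) := by
  induction n with
  | zero => rfl
  | succ n ih => rw [List.range_succ, List.map_append, steps_append, ← ih]; rfl

lemma run_eq_steps_take_of_map_range_eq {w : ℕ → A} {u : List A}
    (hw : (List.range u.length).map w = u) {i : ℕ} (hi : i ≤ u.length) :
    M.run w i = M.steps M.init (u.take i) := by
  rw [run_eq_steps_map_range, ← hw, ← List.map_take, List.take_range, min_eq_left hi]

lemma AccCycle.of_path {q₁ q₂ : Q} {v v' : List A} (h : M.AccCycle q₁)
    (hv : M.steps q₁ v = q₂) (hv' : M.steps q₂ v' = q₁) : M.AccCycle q₂ := by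
  obtain ⟨x, hx, hxq, i, hi, hacc⟩ := h
  refine ⟨v' ++ x ++ v, by simp [hx], by rw [steps_append, steps_append, hv', hxq, hv],
    v'.length + i, by simp only [List.length_append]; omega, ?_⟩
  rwa [List.append_assoc, List.take_length_add_append, steps_append, hv',
    List.take_append_of_le_length hi.le]

section Blocks

variable {p : List A} {B : ι → List A} {q : Q}

lemma steps_blockPrefix (hp : M.steps M.init p = q) (hB : ∀ i, M.steps q (B i) = q)
    (b : ℕ → ι) : ∀ k, M.steps M.init (blockPrefix p B b k) = q
  | 0 => hp
  | k + 1 => by rw [blockPrefix, steps_append, steps_blockPrefix hp hB b k, hB]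

lemma run_blockWord (hp : M.steps M.init p = q) (hB : ∀ i, M.steps q (B i) = q)
    (hne : ∀ i, B i ≠ []) (d : A) (b : ℕ → ι) (k : ℕ) {j : ℕ}
    (hj : j ≤ (B (b k)).length) :
    M.run (blockWord p B d b) ((blockPrefix p B b k).length + j) =
      M.steps q ((B (b k)).take j) := by
  rw [run_eq_steps_take_of_map_range_eq (map_range_blockWord hne d b (k + 1))
    (by rw [length_blockPrefix_succ]; omega), blockPrefix, List.take_length_add_append,
    steps_append, steps_blockPrefix hp hB]

lemma blockWord_mem_lang (hp : M.steps M.init p = q) (hB : ∀ i, M.steps q (B i) = q)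
    (hne : ∀ i, B i ≠ []) (d : A) {b : ℕ → ι} {i₀ : ι}
    (hacc : ∃ j < (B i₀).length, M.steps q ((B i₀).take j) ∈ M.acc)
    (hb : {k | b k = i₀}.Infinite) : blockWord p B d b ∈ M.Lang := by
  obtain ⟨j, hj, hacc⟩ := hacc
  have hinj : (fun k => (blockPrefix p B b k).length + j).Injective :=
    (add_left_injective j).comp (strictMono_length_blockPrefix hne b).injective
  refine (hb.image hinj.injOn).mono ?_
  rintro _ ⟨k, rfl, rfl⟩
  show M.run _ _ ∈ M.acc
  rwa [run_blockWord hp hB hne d b k hj.le]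

lemma blockWord_notMem_lang (hp : M.steps M.init p = q) (hB : ∀ i, M.steps q (B i) = q)
    (hne : ∀ i, B i ≠ []) (d : A) {b : ℕ → ι} {K : ℕ}
    (hrej : ∀ k ≥ K, ∀ j < (B (b k)).length, M.steps q ((B (b k)).take j) ∉ M.acc) :
    blockWord p B d b ∉ M.Lang := by
  have hblocks : ∀ k ≥ K, ∀ n, (blockPrefix p B b K).length ≤ n →
      n < (blockPrefix p B b k).length → M.run (blockWord p B d b) n ∉ M.acc := by
    intro k hk
    induction k, hk using Nat.le_induction with
    | base => intro n h₁ h₂; omega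
    | succ k hk ih =>
      intro n h₁ h₂
      rcases lt_or_ge n (blockPrefix p B b k).length with h | h
      · exact ih n h₁ h
      obtain ⟨j, rfl⟩ := Nat.exists_eq_add_of_le h
      rw [length_blockPrefix_succ] at h₂
      rw [run_blockWord hp hB hne d b k (by omega)]
      exact hrej k hk j (by omega)
  intro hw
  refine hw ((finite_Iio (blockPrefix p B b K).length).subset fun n hn => ?_)
  by_contra hge
  exact hblocks (max K (n + 1)) (le_max_left _ _) n (not_lt.1 hge)
    ((Nat.lt_succ_self n).trans_le ((le_max_right _ _).trans (le_length_blockPrefix hne b _))) hn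

end Blocks

theorem preimage_lang_blockWord {p x y : List A} {q : Q} (hp : M.steps M.init p = q)
    (hx : x ≠ []) (hy : y ≠ []) (hxq : M.steps q x = q) (hyq : M.steps q y = q)
    (hacc : ∃ i < x.length, M.steps q (x.take i) ∈ M.acc)
    (hrej : ∀ j < y.length, M.steps q (y.take j) ∉ M.acc) (d : A) :
    blockWord p (cond · x y) d ⁻¹' M.Lang = {b | {k | b k}.Infinite} := by
  have hB : ∀ c, M.steps q (cond c x y) = q := Bool.forall_bool.2 ⟨hyq, hxq⟩
  have hne : ∀ c, cond c x y ≠ [] := Bool.forall_bool.2 ⟨hy, hx⟩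
  ext b
  refine ⟨fun hb => ?_, blockWord_mem_lang hp hB hne d (i₀ := true) hacc⟩
  by_contra hfin
  obtain ⟨K, hK⟩ := (not_infinite.1 hfin).bddAbove
  refine blockWord_notMem_lang hp hB hne d (K := K + 1) (fun k hk => ?_) hb
  have hbk : b k = false := Bool.eq_false_iff.2 fun hbk => by have := hK hbk; omega
  simpa only [hbk, cond_false] using hrej

end DBA

theorem fsigma_gdelta_inherentlyWeak_general {A Q : Type*}
    (M : DBA A Q) (h1 : IsFsigmaW M.Lang) (h2 : IsGdeltaW M.Lang) :
    M.InherentlyWeak := by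
  rintro ⟨q₁, q₂, ⟨u, hu⟩, ⟨v, hv⟩, ⟨v', hv'⟩, hacc, y, hy, hyq, hrej⟩
  obtain ⟨x, hx, hxq, hxacc⟩ := hacc.of_path hv hv'
  obtain ⟨d, -⟩ := List.exists_mem_of_ne_nil x hx
  have hp : M.steps M.init (u ++ v) = q₂ := by rw [DBA.steps_append, hu, hv]
  refine not_isGδ_setOf_infinite_true_and_compl ?_
  rw [← DBA.preimage_lang_blockWord hp hx hy hxq hyq hxacc hrej d]
  exact ⟨h2.isGδ_preimage (blockWord_congr d), h1.isGδ_preimage_compl (blockWord_congr d)⟩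

/-- Every deterministic Büchi automaton accepting an ω-language in
`F_σ ∩ G_δ` (prefix-distance topology on `Σ^ω`) is inherently weak. -/
theorem fsigma_gdelta_inherentlyWeak {A Q : Type*} [Finite Q]
    (M : DBA A Q) (h1 : IsFsigmaW M.Lang) (h2 : IsGdeltaW M.Lang) :
    M.InherentlyWeak :=
  fsigma_gdelta_inherentlyWeak_general M h1 h2
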